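/- Fix q > 1. λ ∈ ℂ is an eigenvalue of the q-difference pencil (i.e. there is a nonzero u ∈ ℓ²(q^ℤ) solving (a(t)u^Δ)^{Δρ} + (b(t)+2λc(t)+λ²)u = 0) if and only if λ̂ = q^{-1/4}λ is an eigenvalue of the discrete pencil â_n û_{n+1} + â_{n-1}û_{n-1} + (b̂_n + 2λ̂ĉ_n + λ̂²)û_n = 0 with nonzero solution û ∈ ℓ²(ℤ), where û_n = q^{n/2}u(q^n). -/

import Mathlib

/-!
The substitution `û_n = q^{n/2} u(q^n)` turns the weighted norm of `ℓ²(q^ℤ)` into the norm of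
`ℓ²(ℤ)`, and expanding the two q-derivatives shows that at `t = q^n` the q-difference expression
equals `q^{(1-n)/2}` times the discrete pencil expression, the shift `b̂` absorbing the diagonal
terms of the second difference. Every sequence on `ℤ` is `û` for some `u`, because `n ↦ q^n` is
injective, so eigenvectors of the two pencils correspond.
-/

/-- The q-derivative `y^Δ(t) = (y(qt) - y(t))/((q-1)t)`. -/
noncomputable def qDeriv (q : ℝ) (y : ℝ → ℂ) (t : ℝ) : ℂ :=
  (y (q * t) - y t) / (((q : ℂ) - 1) * (t : ℂ))

theorem qDeriv_mul_qDeriv_div {q t : ℝ} (hq₀ : q ≠ 0) (hq₁ : q ≠ 1) (ht : t ≠ 0)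
    (a u : ℝ → ℂ) :
    qDeriv q (fun s => a s * qDeriv q u s) (t / q)
      = q * (a t / (((q : ℂ) - 1) ^ 2 * (t : ℂ) ^ 2)) * (u (q * t) - u t)
        - a (t / q) / (((q : ℂ) - 1) ^ 2 * ((t / q : ℝ) : ℂ) ^ 2) * (u t - u (t / q)) := by
  have hq₀' : (q : ℂ) ≠ 0 := by exact_mod_cast hq₀
  have hq₁' : (q : ℂ) - 1 ≠ 0 := sub_ne_zero.mpr (by exact_mod_cast hq₁)
  have ht' : (t : ℂ) ≠ 0 := by exact_mod_cast ht
  have hqt : q * (t / q) = t := mul_div_cancel₀ t hq₀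
  simp only [qDeriv, hqt]
  push_cast
  field_simp

noncomputable def qLatticeSeq (q : ℝ) (u : ℝ → ℂ) (n : ℤ) : ℂ :=
  (Real.sqrt q : ℂ) ^ n * u (q ^ n)

section

variable {q : ℝ}

theorem rpow_neg_one_fourth_sq (hq : 0 ≤ q) : (q ^ (-(1 / 4 : ℝ))) ^ 2 = (Real.sqrt q)⁻¹ := by
  rw [← Real.rpow_natCast, ← Real.rpow_mul hq, Real.sqrt_eq_rpow, ← Real.rpow_neg hq]
  norm_num

theorem ofReal_sqrt_ne_zero (hq : 0 < q) : (Real.sqrt q : ℂ) ≠ 0 :=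
  Complex.ofReal_ne_zero.mpr (Real.sqrt_ne_zero'.mpr hq)

theorem norm_qLatticeSeq_sq (hq : 0 ≤ q) (u : ℝ → ℂ) (n : ℤ) :
    ‖qLatticeSeq q u n‖ ^ 2 = q ^ n * ‖u (q ^ n)‖ ^ 2 := by
  rw [qLatticeSeq, norm_mul, norm_zpow, Complex.norm_real,
    Real.norm_of_nonneg (Real.sqrt_nonneg q), mul_pow, ← zpow_natCast (_ ^ n), ← zpow_mul,
    mul_comm n, zpow_mul, zpow_natCast, Real.sq_sqrt hq, mul_comm]

theorem qLatticeSeq_ne_zero_iff (hq : 0 < q) (u : ℝ → ℂ) :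
    qLatticeSeq q u ≠ 0 ↔ ∃ n : ℤ, u (q ^ n) ≠ 0 := by
  simp [Function.ne_iff, qLatticeSeq, zpow_ne_zero _ (ofReal_sqrt_ne_zero hq)]

theorem qLatticeSeq_surjective (hq₀ : 0 < q) (hq₁ : q ≠ 1) :
    Function.Surjective (qLatticeSeq q) := by
  intro v
  refine ⟨Function.extend (fun n : ℤ => q ^ n) (fun n => (Real.sqrt q : ℂ) ^ (-n) * v n) 0, ?_⟩
  funext n
  rw [qLatticeSeq, (zpow_right_injective₀ hq₀ hq₁).extend_apply, zpow_neg, 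
    mul_inv_cancel_left₀ (zpow_ne_zero n (ofReal_sqrt_ne_zero hq₀))]

theorem qPencil_eq_zpow_mul_latticePencil (hq₀ : 0 < q) (hq₁ : q ≠ 1)
    {a b c ahat bhat chat : ℝ → ℂ} {lam lamhat : ℂ}
    (hlamhat : lamhat = ((q ^ (-(1 / 4 : ℝ)) : ℝ) : ℂ) * lam)
    (hahat : ∀ t : ℝ, ahat t = a t / (((q : ℂ) - 1) ^ 2 * (t : ℂ) ^ 2))
    (hbhat : ∀ t : ℝ, bhat t = b t / (Real.sqrt q : ℂ)
      - (Real.sqrt q : ℂ) * ahat t - ahat (t / q) / (Real.sqrt q : ℂ))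
    (hchat : ∀ t : ℝ, chat t = ((q ^ (-(1 / 4 : ℝ)) : ℝ) : ℂ) * c t) (u : ℝ → ℂ) (n : ℤ) :
    qDeriv q (fun s => a s * qDeriv q u s) (q ^ n / q)
        + (b (q ^ n) + 2 * lam * c (q ^ n) + lam ^ 2) * u (q ^ n)
      = (Real.sqrt q : ℂ) ^ (1 - n) * (ahat (q ^ n) * qLatticeSeq q u (n + 1)
        + ahat (q ^ (n - 1)) * qLatticeSeq q u (n - 1)
        + (bhat (q ^ n) + 2 * lamhat * chat (q ^ n) + lamhat ^ 2) * qLatticeSeq q u n) := by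
  have hdiv : q ^ n / q = q ^ (n - 1) := (zpow_sub_one₀ hq₀.ne' n).symm
  have hmul : q * q ^ n = q ^ (n + 1) := (zpow_add_one₀ hq₀.ne' n ▸ mul_comm _ _)
  have hsq : (Real.sqrt q : ℂ) ^ 2 = q := by exact_mod_cast Real.sq_sqrt hq₀.le
  have hr : (((q ^ (-(1 / 4 : ℝ)) : ℝ) : ℂ)) ^ 2 = (Real.sqrt q : ℂ)⁻¹ := by
    exact_mod_cast rpow_neg_one_fourth_sq hq₀.le
  have hcoef : bhat (q ^ n) + 2 * lamhat * chat (q ^ n) + lamhat ^ 2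
      = (b (q ^ n) + 2 * lam * c (q ^ n) + lam ^ 2) / Real.sqrt q
        - Real.sqrt q * ahat (q ^ n) - ahat (q ^ (n - 1)) / Real.sqrt q := by
    rw [hbhat, hchat, hlamhat, hdiv]
    linear_combination (2 * lam * c (q ^ n) + lam ^ 2) * hr
  rw [qDeriv_mul_qDeriv_div hq₀.ne' hq₁ (zpow_ne_zero n hq₀.ne'), ← hahat, ← hahat, hcoef, hdiv,
    hmul]
  have hs := ofReal_sqrt_ne_zero hq₀
  simp only [qLatticeSeq, zpow_sub₀ hs, zpow_add₀ hs, zpow_one]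
  rw [← hsq]
  field_simp
  ring

end

/-- `λ` is an eigenvalue of the q-difference pencil (nonzero `u ∈ ℓ²(q^ℤ)`
solving `(a u^Δ)^{Δρ} + (b + 2λc + λ²)u = 0`) iff `λ̂ = q^{-1/4}λ` is an eigenvalue of the
discrete pencil `â_n û_{n+1} + â_{n-1}û_{n-1} + (b̂_n + 2λ̂ĉ_n + λ̂²)û_n = 0` with nonzero
`û ∈ ℓ²(ℤ)`. -/
theorem q_difference_pencil_eigenvalue_equiv
    (q : ℝ) (hq : 1 < q) (a b c : ℝ → ℂ) (lam : ℂ)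
    (ahat bhat chat : ℝ → ℂ) (lamhat : ℂ)
    (hlamhat : lamhat = ((q ^ (-(1 / 4 : ℝ)) : ℝ) : ℂ) * lam)
    (hahat : ∀ t : ℝ, ahat t = a t / (((q : ℂ) - 1) ^ 2 * (t : ℂ) ^ 2))
    (hbhat : ∀ t : ℝ, bhat t = b t / (Real.sqrt q : ℂ)
      - (Real.sqrt q : ℂ) * ahat t - ahat (t / q) / (Real.sqrt q : ℂ))
    (hchat : ∀ t : ℝ, chat t = ((q ^ (-(1 / 4 : ℝ)) : ℝ) : ℂ) * c t) :
    (∃ u : ℝ → ℂ, (∃ n : ℤ, u ((q : ℝ) ^ n) ≠ 0) ∧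
        (Summable fun n : ℤ => (q : ℝ) ^ n * ‖u ((q : ℝ) ^ n)‖ ^ 2) ∧
        ∀ n : ℤ, qDeriv q (fun s => a s * qDeriv q u s) ((q : ℝ) ^ n / q)
          + (b ((q : ℝ) ^ n) + 2 * lam * c ((q : ℝ) ^ n) + lam ^ 2) * u ((q : ℝ) ^ n) = 0) ↔
    (∃ v : ℤ → ℂ, v ≠ 0 ∧ (Summable fun n : ℤ => ‖v n‖ ^ 2) ∧
        ∀ n : ℤ, ahat ((q : ℝ) ^ n) * v (n + 1) + ahat ((q : ℝ) ^ (n - 1)) * v (n - 1)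
          + (bhat ((q : ℝ) ^ n) + 2 * lamhat * chat ((q : ℝ) ^ n) + lamhat ^ 2) * v n = 0) := by
  have hq₀ : 0 < q := one_pos.trans hq
  rw [(qLatticeSeq_surjective hq₀ hq.ne').exists]
  refine exists_congr fun u => and_congr (qLatticeSeq_ne_zero_iff hq₀ u).symm
    (and_congr ?_ (forall_congr' fun n => ?_))
  · simp only [norm_qLatticeSeq_sq hq₀.le]
  · rw [qPencil_eq_zpow_mul_latticePencil hq₀ hq.ne' hlamhat hahat hbhat hchat, mul_eq_zero,
      or_iff_right (zpow_ne_zero _ (ofReal_sqrt_ne_zero hq₀))]
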